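/- Let G be a topological group. The map φ ↦ φ̌, where φ̌(x) = φ(x⁻¹), is a linear bijection of C^∞(G) onto itself which is an isomorphism of locally convex spaces for the topology generated by the seminorms p_{K₁,K₂}(f) = sup{|(D^λ_γ f)(x)| : γ ∈ K₁, x ∈ K₂} over compact K₁ ⊆ L(G)^k (k ≥ 0) and compact K₂ ⊆ G. -/

import Mathlib

set_option linter.unusedSectionVars false

open Filter Topology Set

section OneParamDefs

variable (G : Type*) [Group G] [TopologicalSpace G] [IsTopologicalGroup G]

/-- The set of continuous one-parameter subgroups of `G`, as a subset of `C(ℝ, G)`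
(the latter carrying the compact-open topology, i.e. the topology of uniform
convergence on compact subsets of `ℝ`). -/
def OneParam : Set C(ℝ, G) := {γ | ∀ t s : ℝ, γ (t + s) = γ t * γ s}

variable {G}

/-- The trivial one-parameter subgroup. -/
def oneOP : ↥(OneParam G) := ⟨⟨fun _ => 1, continuous_const⟩, fun _ _ => by simp⟩

/-- The adjoint action of `G` on its one-parameter subgroups. -/
def adOP (g : G) (γ : ↥(OneParam G)) : ↥(OneParam G) :=
  ⟨⟨fun t => g * γ.1 t * g⁻¹, by fun_prop⟩, fun t s => by
    simp only [ContinuousMap.coe_mk, γ.2 t s]; group⟩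

/-- Pairing of one-parameter subgroups of `H` and `G` into a one-parameter
subgroup of `H × G`. -/
def prodOP {H : Type*} [Group H] [TopologicalSpace H] [IsTopologicalGroup H]
    (β : ↥(OneParam H)) (γ : ↥(OneParam G)) : ↥(OneParam (H × G)) :=
  ⟨⟨fun t => (β.1 t, γ.1 t), by fun_prop⟩, fun t s => by
    simp only [ContinuousMap.coe_mk, β.2 t s, γ.2 t s]; rfl⟩

end OneParamDefs

section Smoothness

variable {G : Type*} [Group G] [TopologicalSpace G] [IsTopologicalGroup G]
variable {Y : Type*} [AddCommGroup Y] [Module ℝ Y] [TopologicalSpace Y]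

/-- `φ` has derivative `v` at `g` along the one-parameter subgroup `γ`. -/
def HasLieDeriv (φ : G → Y) (γ : ↥(OneParam G)) (g : G) (v : Y) : Prop :=
  Tendsto (fun t : ℝ => t⁻¹ • (φ (g * γ.1 t) - φ g)) (𝓝[≠] (0 : ℝ)) (𝓝 v)

/-- `F` is a coherent family of iterated derivatives of `φ` up to order `n`:
`F k g (γ₁, …, γ_k) = (D^λ_{γ_k} ⋯ D^λ_{γ₁} φ)(g)`, each of them jointly continuous. -/
def CnSeq (n : ℕ) (φ : G → Y) (F : ∀ k : ℕ, G → (Fin k → ↥(OneParam G)) → Y) : Prop :=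
  (∀ g γ, F 0 g γ = φ g) ∧
  (∀ k, k < n → ∀ (g : G) (γ : Fin (k + 1) → ↥(OneParam G)),
      HasLieDeriv (fun h => F k h fun i => γ i.castSucc) (γ (Fin.last k)) g (F (k + 1) g γ)) ∧
  (∀ k, k ≤ n → Continuous fun p : G × (Fin k → ↥(OneParam G)) => F k p.1 p.2)

/-- `F` is a coherent family of iterated derivatives of `φ` of all orders. -/
def SmoothSeq (φ : G → Y) (F : ∀ k : ℕ, G → (Fin k → ↥(OneParam G)) → Y) : Prop :=
  ∀ n, CnSeq n φ F

/-- `φ ∈ C^∞(G, Y)`: all iterated derivatives along continuous one-parameter subgroups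
exist and are jointly continuous. -/
def IsCInf (φ : G → Y) : Prop := ∃ F, SmoothSeq φ F

theorem HasLieDeriv.add' [ContinuousAdd Y] {φ ψ : G → Y} {γ : ↥(OneParam G)} {g : G} {v w : Y}
    (h1 : HasLieDeriv φ γ g v) (h2 : HasLieDeriv ψ γ g w) :
    HasLieDeriv (fun x => φ x + ψ x) γ g (v + w) := by
  refine (h1.add h2).congr fun t => ?_
  simp only [smul_sub, smul_add]
  abel

theorem HasLieDeriv.const_smul' {𝕜 : Type*} [Monoid 𝕜] [DistribMulAction 𝕜 Y]
    [SMulCommClass ℝ 𝕜 Y] [ContinuousConstSMul 𝕜 Y]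
    {φ : G → Y} {γ : ↥(OneParam G)} {g : G} {v : Y} (c : 𝕜) (h : HasLieDeriv φ γ g v) :
    HasLieDeriv (fun x => c • φ x) γ g (c • v) := by
  haveI := SMulCommClass.symm ℝ 𝕜 Y
  refine (h.const_smul c).congr fun t => ?_
  show c • (t⁻¹ • (φ (g * γ.1 t) - φ g)) = t⁻¹ • (c • φ (g * γ.1 t) - c • φ g)
  rw [← smul_sub, smul_comm]

theorem SmoothSeq.addSeq [ContinuousAdd Y] {φ ψ : G → Y} {F F'}
    (hF : SmoothSeq φ F) (hF' : SmoothSeq ψ F') :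
    SmoothSeq (φ + ψ) (fun k g γ => F k g γ + F' k g γ) := by
  intro n
  refine ⟨fun g γ => by
    show F 0 g γ + F' 0 g γ = (φ + ψ) g
    rw [(hF n).1 g γ, (hF' n).1 g γ]; rfl, fun k hk g γ => ?_,
    fun k hk => ((hF n).2.2 k hk).add ((hF' n).2.2 k hk)⟩
  exact ((hF n).2.1 k hk g γ).add' ((hF' n).2.1 k hk g γ)

theorem SmoothSeq.smulSeq {𝕜 : Type*} [Monoid 𝕜] [DistribMulAction 𝕜 Y]
    [SMulCommClass ℝ 𝕜 Y] [ContinuousConstSMul 𝕜 Y] {φ : G → Y} {F}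
    (c : 𝕜) (hF : SmoothSeq φ F) :
    SmoothSeq (c • φ) (fun k g γ => c • F k g γ) := by
  intro n
  refine ⟨fun g γ => by
    show c • F 0 g γ = (c • φ) g
    rw [(hF n).1 g γ]; rfl, fun k hk g γ => ?_,
    fun k hk => ((hF n).2.2 k hk).const_smul c⟩
  exact ((hF n).2.1 k hk g γ).const_smul' c

theorem SmoothSeq.zeroSeq : SmoothSeq (0 : G → Y) (fun _ _ _ => 0) := by
  intro n
  refine ⟨fun _ _ => rfl, fun k hk g γ => ?_, fun k hk => continuous_const⟩
  have : (fun t : ℝ => t⁻¹ • ((0 : Y) - 0)) = fun _ => (0 : Y) := by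
    funext t; simp
  simpa [HasLieDeriv, this] using tendsto_const_nhds

theorem SmoothSeq.unique [T2Space Y] {φ : G → Y} {F F'}
    (hF : SmoothSeq φ F) (hF' : SmoothSeq φ F') : F = F' := by
  have key : ∀ k, F k = F' k := by
    intro k
    induction k with
    | zero => funext g γ; rw [(hF 0).1 g γ, (hF' 0).1 g γ]
    | succ k ih =>
      funext g γ
      have h1 := (hF (k + 1)).2.1 k (Nat.lt_succ_self k) g γ
      have h2 := (hF' (k + 1)).2.1 k (Nat.lt_succ_self k) g γ
      rw [ih] at h1
      exact tendsto_nhds_unique h1 h2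
  funext k; exact key k

end Smoothness

section Carrier

variable (𝕜 : Type*) [Ring 𝕜]
variable (G : Type*) [Group G] [TopologicalSpace G] [IsTopologicalGroup G]
variable (Y : Type*) [AddCommGroup Y] [Module ℝ Y] [TopologicalSpace Y] [ContinuousAdd Y]
  [Module 𝕜 Y] [SMulCommClass ℝ 𝕜 Y] [ContinuousConstSMul 𝕜 Y]

/-- The space `E(G, Y) = C^∞(G, Y)` of smooth `Y`-valued functions on `G`,
as a submodule of `G → Y`. -/
def SmoothCarrier : Submodule 𝕜 (G → Y) where
  carrier := {φ | IsCInf φ}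
  add_mem' := by
    rintro φ ψ ⟨F, hF⟩ ⟨F', hF'⟩
    exact ⟨_, hF.addSeq hF'⟩
  zero_mem' := ⟨_, SmoothSeq.zeroSeq⟩
  smul_mem' := by
    rintro c φ ⟨F, hF⟩
    exact ⟨_, hF.smulSeq c⟩

variable {𝕜 G Y}

theorem mem_smoothCarrier {φ : G → Y} : φ ∈ SmoothCarrier 𝕜 G Y ↔ IsCInf φ := Iff.rfl

end Carrier
section Topology

variable (𝕜 : Type*) [Ring 𝕜]
variable (G : Type*) [Group G] [TopologicalSpace G] [IsTopologicalGroup G]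
variable (Y : Type*) [AddCommGroup Y] [Module ℝ Y] [UniformSpace Y] [ContinuousAdd Y]
  [Module 𝕜 Y] [SMulCommClass ℝ 𝕜 Y] [ContinuousConstSMul 𝕜 Y]

variable {G Y}

/-- The (canonical choice of the) family of iterated derivatives of a function `φ`,
nonzero only when `φ` is smooth. -/
noncomputable def itD (φ : G → Y) : ∀ k : ℕ, G → (Fin k → ↥(OneParam G)) → Y :=
  @dite _ (IsCInf φ) (Classical.dec _) (fun h => h.choose) (fun _ => fun _ _ _ => 0)

theorem itD_smoothSeq {φ : G → Y} (h : IsCInf φ) : SmoothSeq φ (itD φ) := by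
  unfold itD
  rw [dif_pos h]
  exact h.choose_spec

theorem itD_spec [T2Space Y] {φ : G → Y} {F} (h : SmoothSeq φ F) : itD φ = F :=
  SmoothSeq.unique (itD_smoothSeq ⟨F, h⟩) h

variable (G Y) in
/-- The uniform structure of the topology on `E(G, Y) = C^∞(G, Y)` determined by
the seminorms `p_{K₁,K₂}`: uniform convergence of all iterated derivatives on
compact subsets of `G × L(G)^k`, `k ∈ ℕ`. -/
noncomputable def smoothUniform : UniformSpace ↥(SmoothCarrier 𝕜 G Y) :=
  UniformSpace.comap
    (fun f : ↥(SmoothCarrier 𝕜 G Y) => fun k : ℕ =>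
      UniformOnFun.ofFun {S : Set (G × (Fin k → ↥(OneParam G))) | IsCompact S}
        fun p => itD (f : G → Y) k p.1 p.2)
    inferInstance

variable (G Y) in
/-- The topology on `E(G, Y) = C^∞(G, Y)` of uniform convergence of all iterated
derivatives on compact subsets of `G × L(G)^k`. -/
noncomputable abbrev smoothTop : TopologicalSpace ↥(SmoothCarrier 𝕜 G Y) :=
  (smoothUniform 𝕜 G Y).toTopologicalSpace

end Topology
section Instances

variable {𝕜 : Type*} [Ring 𝕜]
variable {G : Type*} [Group G] [TopologicalSpace G] [IsTopologicalGroup G]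
variable {Y : Type*} [AddCommGroup Y] [Module ℝ Y] [UniformSpace Y] [ContinuousAdd Y]
  [Module 𝕜 Y] [SMulCommClass ℝ 𝕜 Y] [ContinuousConstSMul 𝕜 Y]

theorem itD_add [T2Space Y] (f g : ↥(SmoothCarrier 𝕜 G Y)) :
    itD ((f + g : ↥(SmoothCarrier 𝕜 G Y)) : G → Y)
      = fun k x γ => itD (f : G → Y) k x γ + itD (g : G → Y) k x γ :=
  itD_spec ((itD_smoothSeq f.2).addSeq (itD_smoothSeq g.2))

theorem itD_smul [T2Space Y] (c : 𝕜) (f : ↥(SmoothCarrier 𝕜 G Y)) :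
    itD ((c • f : ↥(SmoothCarrier 𝕜 G Y)) : G → Y)
      = fun k x γ => c • itD (f : G → Y) k x γ :=
  itD_spec ((itD_smoothSeq f.2).smulSeq c)

theorem smooth_continuousAdd [T2Space Y] [IsUniformAddGroup Y] :
    @ContinuousAdd ↥(SmoothCarrier 𝕜 G Y) (smoothTop 𝕜 G Y) _ := by
  letI τ : TopologicalSpace ↥(SmoothCarrier 𝕜 G Y) := smoothTop 𝕜 G Y
  set Φ := fun f : ↥(SmoothCarrier 𝕜 G Y) => fun k : ℕ =>
      UniformOnFun.ofFun {S : Set (G × (Fin k → ↥(OneParam G))) | IsCompact S}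
        (fun p => itD (f : G → Y) k p.1 p.2) with hΦdef
  have hind : IsInducing Φ := ⟨rfl⟩
  constructor
  rw [hind.continuous_iff]
  have heq : (Φ ∘ fun p : ↥(SmoothCarrier 𝕜 G Y) × ↥(SmoothCarrier 𝕜 G Y) => p.1 + p.2)
      = fun p => Φ p.1 + Φ p.2 := by
    funext p
    simp only [Function.comp_apply, hΦdef, itD_add p.1 p.2]
    rfl
  rw [heq]
  exact (hind.continuous.comp continuous_fst).add (hind.continuous.comp continuous_snd)

theorem smooth_continuousConstSMul [T2Space Y] [IsUniformAddGroup Y] :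
    @ContinuousConstSMul 𝕜 ↥(SmoothCarrier 𝕜 G Y) (smoothTop 𝕜 G Y) _ := by
  letI τ : TopologicalSpace ↥(SmoothCarrier 𝕜 G Y) := smoothTop 𝕜 G Y
  haveI : UniformContinuousConstSMul 𝕜 Y :=
    uniformContinuousConstSMul_of_continuousConstSMul 𝕜 Y
  set Φ := fun f : ↥(SmoothCarrier 𝕜 G Y) => fun k : ℕ =>
      UniformOnFun.ofFun {S : Set (G × (Fin k → ↥(OneParam G))) | IsCompact S}
        (fun p => itD (f : G → Y) k p.1 p.2) with hΦdef
  have hind : IsInducing Φ := ⟨rfl⟩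
  refine ⟨fun c => ?_⟩
  rw [hind.continuous_iff]
  have heq : (Φ ∘ fun f : ↥(SmoothCarrier 𝕜 G Y) => c • f)
      = fun f => fun k : ℕ =>
        (UniformOnFun.ofFun _ ∘ (((c • ·) : Y → Y) ∘ ·) ∘ UniformOnFun.toFun _) (Φ f k) := by
    funext f
    simp only [Function.comp_apply, hΦdef, itD_smul c f]
    rfl
  rw [heq]
  refine continuous_pi fun k => ?_
  exact ((UniformOnFun.postcomp_uniformContinuous
    (uniformContinuous_const_smul c)).continuous).comp
      ((continuous_apply k).comp hind.continuous)

end Instances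
section ComplexValued

variable (G : Type*) [Group G] [TopologicalSpace G] [IsTopologicalGroup G]

/-- `E(G) = C^∞(G) = C^∞(G, ℂ)`, as a `ℂ`-submodule of `G → ℂ`. -/
noncomputable abbrev EC := ↥(SmoothCarrier ℂ G ℂ)

variable {G}

/-- The convolution `f ∗ u` of a function `f` with a (compactly supported) distribution `u`:
`(f ∗ u)(x) = ǔ(f ∘ L_x)`, where `ǔ(φ) = u(φ̌)` and `φ̌(y) = φ(y⁻¹)`.  (Junk value `0`
at points where `y ↦ f(x y⁻¹)` fails to be smooth.) -/
noncomputable def convFn (u : EC G → ℂ) (f : G → ℂ) : G → ℂ := fun x =>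
  @dite _ (IsCInf fun y => f (x * y⁻¹)) (Classical.dec _)
    (fun h => u ⟨fun y => f (x * y⁻¹), h⟩) (fun _ => 0)

/-- `f̌`, where `f̌(y) = f(y⁻¹)`, as an element of `E(G)` (junk value `0` if it fails
to be smooth, which never happens). -/
noncomputable def checkE (f : EC G) : EC G :=
  @dite _ (IsCInf fun y => (f : G → ℂ) y⁻¹) (Classical.dec _)
    (fun h => ⟨fun y => (f : G → ℂ) y⁻¹, h⟩) (fun _ => 0)

/-- The left translate `f ∘ L_x`, as an element of `E(G)` (junk value `0` if it fails
to be smooth, which never happens). -/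
noncomputable def translE (x : G) (f : EC G) : EC G :=
  @dite _ (IsCInf fun y => (f : G → ℂ) (x * y)) (Classical.dec _)
    (fun h => ⟨fun y => (f : G → ℂ) (x * y), h⟩) (fun _ => 0)

/-- The support of a distribution `u` on `G`: the set of points `x` such that every
neighborhood `U` of `x` supports some smooth function `f` with `u(f) ≠ 0`. -/
def distSupp (u : EC G → ℂ) : Set G :=
  {x | ∀ U ∈ 𝓝 x, ∃ f : EC G, tsupport (f : G → ℂ) ⊆ U ∧ u f ≠ 0}

/-- `D` is a local operator: it does not increase supports. -/
def IsLocalOp (D : EC G →ₗ[ℂ] EC G) : Prop :=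
  Continuous[smoothTop ℂ G ℂ, smoothTop ℂ G ℂ] D ∧
    ∀ f : EC G, tsupport ((D f : G → ℂ)) ⊆ tsupport (f : G → ℂ)

/-- `D` commutes with all left translations. -/
def IsLeftInvariant (D : EC G →ₗ[ℂ] EC G) : Prop :=
  ∀ (x : G) (f : EC G), D (translE x f) = translE x (D f)

end ComplexValued

/-!
Along a one-parameter subgroup, `φ̌ (x γ(t)) = φ (γ(-t) x⁻¹)`, so derivatives of `φ̌` along
left-invariant fields are, up to sign and reversal of order, derivatives of `φ` along
right-invariant fields, and those are left-invariant derivatives along the `Ad`-conjugated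
subgroups: `D_{Ad(x)γ} φ (x⁻¹)`. Proving the iterated formula
`(D^λ)ⁿ φ̌ = (-1)ⁿ ((D^λ)ⁿ φ) ∘ Ψₙ` by induction requires exchanging one right-invariant and one
left-invariant derivative; since only iterated derivatives are known to exist and be continuous,
the exchange is done by integrating (fundamental theorem of calculus and Fubini).
The formula shows that `φ̌` is smooth and that every seminorm of `φ̌` is a seminorm of `φ` over
the compact image of `K₁ × K₂` under `Ψₙ`; so `φ ↦ φ̌` is a continuous linear involution.
-/

open MeasureTheory intervalIntegral

section MixedPartials

variable {E : Type*} [NormedAddCommGroup E] [NormedSpace ℝ E]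

theorem intervalIntegral_integral_swap_of_continuous {f : ℝ → ℝ → E}
    (hf : Continuous (Function.uncurry f)) (a b c d : ℝ) :
    ∫ x in a..b, ∫ y in c..d, f x y = ∫ y in c..d, ∫ x in a..b, f x y := by
  simp only [intervalIntegral_eq_integral_uIoc, MeasureTheory.integral_smul]
  rw [integral_integral_swap, smul_comm]
  rw [Measure.prod_restrict]
  exact (hf.continuousOn.integrableOn_compact (isCompact_uIcc.prod isCompact_uIcc)).mono_set
    (prod_mono uIoc_subset_uIcc uIoc_subset_uIcc)

theorem hasDerivAt_mixed_partial_symm [CompleteSpace E] {W P Q R : ℝ → ℝ → E}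
    (hP : ∀ s t, HasDerivAt (W · t) (P s t) s) (hQ : ∀ s t, HasDerivAt (W s ·) (Q s t) t)
    (hR : ∀ s t, HasDerivAt (Q · t) (R s t) s) (hPc : Continuous (Function.uncurry P))
    (hQc : Continuous (Function.uncurry Q)) (hRc : Continuous (Function.uncurry R)) (s t : ℝ) :
    HasDerivAt (P s ·) (R s t) t := by
  have hPs (t : ℝ) : Continuous (P · t) := hPc.uncurry_right t
  have hQt (s : ℝ) : Continuous (Q s) := hQc.uncurry_left s
  have hRs (t : ℝ) : Continuous (R · t) := hRc.uncurry_right t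
  have ftc_s : ∀ s t, ∫ σ in (0 : ℝ)..s, P σ t = W s t - W 0 t := fun s t =>
    integral_eq_sub_of_hasDerivAt (fun σ _ => hP σ t) ((hPs t).intervalIntegrable _ _)
  have ftc_t : ∀ s t, ∫ r in (0 : ℝ)..t, Q s r = W s t - W s 0 := fun s t =>
    integral_eq_sub_of_hasDerivAt (fun r _ => hQ s r) ((hQt s).intervalIntegrable _ _)
  have ftc_R : ∀ s r, ∫ σ in (0 : ℝ)..s, R σ r = Q s r - Q 0 r := fun s r =>
    integral_eq_sub_of_hasDerivAt (fun σ _ => hR σ r) ((hRs r).intervalIntegrable _ _)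
  have integrated : ∀ t,
      (fun s => ∫ σ in (0 : ℝ)..s, (P σ t - P σ 0)) =
        fun s => ∫ σ in (0 : ℝ)..s, ∫ r in (0 : ℝ)..t, R σ r := by
    intro t; funext s
    rw [intervalIntegral_integral_swap_of_continuous hRc, integral_sub
      ((hPs t).intervalIntegrable _ _) ((hPs 0).intervalIntegrable _ _)]
    simp only [ftc_R]
    rw [integral_sub ((hQt s).intervalIntegrable _ _) ((hQt 0).intervalIntegrable _ _),
      ftc_s, ftc_s, ftc_t, ftc_t]
    abel
  have slice : ∀ t, P s t = P s 0 + ∫ r in (0 : ℝ)..t, R s r := by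
    intro t
    have h₁ : HasDerivAt (fun s => ∫ σ in (0 : ℝ)..s, (P σ t - P σ 0)) (P s t - P s 0) s :=
      (((hPs t).sub (hPs 0)).integral_hasStrictDerivAt 0 s).hasDerivAt
    have h₂ := ((continuous_parametric_intervalIntegral_of_continuous' (μ := volume)
      hRc 0 t).integral_hasStrictDerivAt 0 s).hasDerivAt
    rw [integrated t] at h₁
    rw [← h₁.unique h₂]
    abel
  rw [show (P s ·) = fun t => P s 0 + ∫ r in (0 : ℝ)..t, R s r from funext slice]
  exact ((hRc.uncurry_left s).integral_hasStrictDerivAt 0 t).hasDerivAt.const_add _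

end MixedPartials

section OneParamGroups

variable {G : Type*} [Group G] [TopologicalSpace G] [IsTopologicalGroup G]

theorem oneParam_apply_add (γ : ↥(OneParam G)) (t s : ℝ) : γ.1 (t + s) = γ.1 t * γ.1 s :=
  γ.2 t s

theorem oneParam_apply_zero (γ : ↥(OneParam G)) : γ.1 0 = 1 := by
  simpa using γ.2 0 0

theorem oneParam_apply_neg (γ : ↥(OneParam G)) (t : ℝ) : γ.1 (-t) = (γ.1 t)⁻¹ :=
  eq_inv_of_mul_eq_one_left (by rw [← γ.2, neg_add_cancel, oneParam_apply_zero])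

theorem continuous_adOP : Continuous fun p : G × ↥(OneParam G) => adOP p.1 p.2 := by
  apply Continuous.subtype_mk
  apply ContinuousMap.continuous_of_continuous_uncurry
  have heval : Continuous fun q : ↥(OneParam G) × ℝ => q.1.1 q.2 :=
    continuous_eval.comp ((continuous_subtype_val.comp continuous_fst).prodMk continuous_snd)
  exact ((continuous_fst.fst).mul
    (heval.comp (continuous_fst.snd.prodMk continuous_snd))).mul continuous_fst.fst.inv

theorem Continuous.adOP {X : Type*} [TopologicalSpace X] {a : X → G} {b : X → ↥(OneParam G)}
    (ha : Continuous a) (hb : Continuous b) : Continuous fun x => adOP (a x) (b x) :=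
  continuous_adOP.comp (ha.prodMk hb)

variable {E : Type*} [NormedAddCommGroup E] [NormedSpace ℝ E]

theorem hasLieDeriv_iff_hasDerivAt {φ : G → E} {γ : ↥(OneParam G)} {g : G} {v : E} :
    HasLieDeriv φ γ g v ↔ HasDerivAt (fun t => φ (g * γ.1 t)) v 0 := by
  have hslope : slope (fun t => φ (g * γ.1 t)) 0 = fun t => t⁻¹ • (φ (g * γ.1 t) - φ g) := by
    funext t
    simp [slope_def_module, oneParam_apply_zero]
  rw [hasDerivAt_iff_tendsto_slope, hslope, HasLieDeriv]

theorem hasDerivAt_oneParam_mul_of_zero {f f' : G → E} {δ : ↥(OneParam G)}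
    (h : ∀ z, HasDerivAt (fun t => f (δ.1 t * z)) (f' z) 0) (y : G) (t : ℝ) :
    HasDerivAt (fun t => f (δ.1 t * y)) (f' (δ.1 t * y)) t := by
  have h' := HasDerivAt.comp_sub_const t t (by rw [sub_self]; exact h (δ.1 t * y))
  simpa only [← mul_assoc, ← oneParam_apply_add, sub_add_cancel] using h'

end OneParamGroups

section RightInvariantDerivatives

variable {G : Type*} [Group G] [TopologicalSpace G] [IsTopologicalGroup G]
variable {E : Type*} [NormedAddCommGroup E] [NormedSpace ℝ E]
variable {φ : G → E} {F : ∀ k : ℕ, G → (Fin k → ↥(OneParam G)) → E}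

theorem SmoothSeq.continuous (hF : SmoothSeq φ F) (k : ℕ) :
    Continuous fun p : G × (Fin k → ↥(OneParam G)) => F k p.1 p.2 :=
  (hF k).2.2 k le_rfl

theorem SmoothSeq.translate (hF : SmoothSeq φ F) (h : G) :
    SmoothSeq (fun z => φ (h * z)) (fun k z α => F k (h * z) α) := by
  intro n
  refine ⟨fun g γ => (hF n).1 (h * g) γ, fun k hk g γ => ?_, fun k hk => ?_⟩
  · simpa only [HasLieDeriv, mul_assoc] using (hF n).2.1 k hk (h * g) γ
  · exact ((hF n).2.2 k hk).comp ((continuous_const.mul continuous_fst).prodMk continuous_snd)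

theorem SmoothSeq.hasDerivAt_mul_oneParam (hF : SmoothSeq φ F) (k : ℕ) (x : G) (γ : ↥(OneParam G))
    (α : Fin k → ↥(OneParam G)) :
    HasDerivAt (fun s => F k (x * γ.1 s) α) (F (k + 1) x (Fin.snoc α γ)) 0 := by
  have h := (hF (k + 1)).2.1 k k.lt_succ_self x (Fin.snoc α γ)
  simp only [Fin.snoc_castSucc, Fin.snoc_last] at h
  exact hasLieDeriv_iff_hasDerivAt.1 h

theorem SmoothSeq.hasDerivAt_oneParam_mul (hF : SmoothSeq φ F) (k : ℕ) (L : ↥(OneParam G))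
    (z : G) (α : Fin k → ↥(OneParam G)) (s : ℝ) :
    HasDerivAt (fun s => F k (L.1 s * z) α)
      (F (k + 1) (L.1 s * z) (Fin.snoc α (adOP (L.1 s * z)⁻¹ L))) s := by
  refine hasDerivAt_oneParam_mul_of_zero (f := fun z => F k z α)
    (f' := fun z => F (k + 1) z (Fin.snoc α (adOP z⁻¹ L))) (fun z => ?_) z s
  have hconj : ∀ t, z * (adOP z⁻¹ L).1 t = L.1 t * z := fun t => by
    simp only [adOP, ContinuousMap.coe_mk]
    group
  simpa only [hconj] using hF.hasDerivAt_mul_oneParam k z (adOP z⁻¹ L) α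

/-- If `F` are the iterated derivatives of `φ` along left-invariant fields, then
`rightIterDeriv F k y η` is the iterated derivative along the right-invariant ones:
formally `∂ₛ₁ ⋯ ∂ₛₖ φ (η k (sₖ) ⋯ η 1 (s₁) y)` at `s = 0`. -/
def rightIterDeriv (F : ∀ k : ℕ, G → (Fin k → ↥(OneParam G)) → E) (k : ℕ) (y : G)
    (η : Fin k → ↥(OneParam G)) : E :=
  F k y (adOP y⁻¹ ∘ η)

theorem SmoothSeq.hasDerivAt_rightIterDeriv [CompleteSpace E] (hF : SmoothSeq φ F) (k : ℕ)
    (δ : ↥(OneParam G)) (y : G) (η : Fin k → ↥(OneParam G)) :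
    HasDerivAt (fun t => rightIterDeriv F k (δ.1 t * y) η)
      (rightIterDeriv F (k + 1) y (Fin.cons δ η)) 0 := by
  induction k generalizing φ F y with
  | zero =>
    have h := hF.hasDerivAt_oneParam_mul 0 δ y (adOP y⁻¹ ∘ η) 0
    simp only [oneParam_apply_zero, one_mul] at h
    convert h using 1
    · funext t
      exact ((hF 0).1 _ _).trans ((hF 0).1 _ _).symm
    · rw [rightIterDeriv, Fin.comp_cons]
      congr 1
      funext i
      fin_cases i
      rfl
  | succ k ih =>
    -- `W s t` is the order-`k` right-invariant derivative of `φ (L s * ·)` at `δ t * y`, so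
    -- `∂ₜW = Q` by induction, while `∂ₛW = P`; the claim is `∂ₜP = ∂ₛQ` at `(0, 0)`.
    set L := η (Fin.last k)
    set η' := Fin.init η
    let W : ℝ → ℝ → E := fun s t => F k (L.1 s * (δ.1 t * y)) (adOP (δ.1 t * y)⁻¹ ∘ η')
    let P : ℝ → ℝ → E := fun s t => F (k + 1) (L.1 s * (δ.1 t * y))
      (Fin.snoc (adOP (δ.1 t * y)⁻¹ ∘ η') (adOP (L.1 s * (δ.1 t * y))⁻¹ L))
    let Q : ℝ → ℝ → E := fun s t => F (k + 1) (L.1 s * (δ.1 t * y))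
      (adOP (δ.1 t * y)⁻¹ ∘ Fin.cons δ η')
    let R : ℝ → ℝ → E := fun s t => F (k + 2) (L.1 s * (δ.1 t * y))
      (Fin.snoc (adOP (δ.1 t * y)⁻¹ ∘ Fin.cons δ η') (adOP (L.1 s * (δ.1 t * y))⁻¹ L))
    have hP : ∀ s t, HasDerivAt (W · t) (P s t) s := fun s t =>
      hF.hasDerivAt_oneParam_mul k L _ _ s
    have hQ : ∀ s t, HasDerivAt (W s ·) (Q s t) t := fun s t =>
      hasDerivAt_oneParam_mul_of_zero (f := fun z => rightIterDeriv _ k z η')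
        (fun z => ih (hF.translate (L.1 s)) z η') y t
    have hR : ∀ s t, HasDerivAt (Q · t) (R s t) s := fun s t =>
      hF.hasDerivAt_oneParam_mul (k + 1) L _ _ s
    have hpoint : Continuous fun p : ℝ × ℝ => L.1 p.1 * (δ.1 p.2 * y) := by fun_prop
    have hconj : ∀ {m} (τ : Fin m → ↥(OneParam G)),
        Continuous fun p : ℝ × ℝ => adOP (δ.1 p.2 * y)⁻¹ ∘ τ := fun τ =>
      continuous_pi fun i => ((δ.1.continuous.comp continuous_snd).mul continuous_const).inv.adOP
        continuous_const
    have hlast : Continuous fun p : ℝ × ℝ => adOP (L.1 p.1 * (δ.1 p.2 * y))⁻¹ L :=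
      hpoint.inv.adOP continuous_const
    have hPc : Continuous (Function.uncurry P) :=
      (hF.continuous (k + 1)).comp (hpoint.prodMk ((hconj η').finSnoc hlast))
    have hQc : Continuous (Function.uncurry Q) :=
      (hF.continuous (k + 1)).comp (hpoint.prodMk (hconj _))
    have hRc : Continuous (Function.uncurry R) :=
      (hF.continuous (k + 2)).comp (hpoint.prodMk ((hconj _).finSnoc hlast))
    convert hasDerivAt_mixed_partial_symm hP hQ hR hPc hQc hRc 0 0 using 1
    · funext t
      simp only [P, rightIterDeriv, oneParam_apply_zero, one_mul]
      rw [← Fin.comp_snoc, Fin.snoc_init_self]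
    · simp only [R, rightIterDeriv, oneParam_apply_zero, one_mul]
      rw [← Fin.comp_snoc, ← Fin.cons_snoc_eq_snoc_cons, Fin.snoc_init_self]

theorem SmoothSeq.inv [CompleteSpace E] (hF : SmoothSeq φ F) :
    SmoothSeq (fun x => φ x⁻¹)
      (fun k x γ => (-1 : ℝ) ^ k • rightIterDeriv F k x⁻¹ (γ ∘ Fin.rev)) := by
  intro n
  refine ⟨fun g γ => by simp [rightIterDeriv, (hF 0).1], fun k _ g γ => ?_, fun k _ => ?_⟩
  · set L := γ (Fin.last k)
    have hrev : Fin.cons L (Fin.init γ ∘ Fin.rev) = γ ∘ Fin.rev := by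
      funext i
      refine Fin.cases ?_ (fun j => ?_) i
      · simp [L]
      · simp [Fin.init, Fin.rev_succ]
    have hflow : ∀ t, (g * L.1 t)⁻¹ = L.1 (0 - t) * g⁻¹ := fun t => by
      rw [zero_sub, oneParam_apply_neg, mul_inv_rev]
    have h := (HasDerivAt.comp_const_sub (0 : ℝ) 0 (by
      rw [sub_zero]
      exact hF.hasDerivAt_rightIterDeriv k L g⁻¹ (Fin.init γ ∘ Fin.rev))).const_smul ((-1 : ℝ) ^ k)
    rw [hasLieDeriv_iff_hasDerivAt]
    convert h using 1
    · funext t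
      simp only [Pi.smul_apply, hflow]
      rfl
    · beta_reduce
      rw [hrev, pow_succ, mul_neg_one, neg_smul, smul_neg]
  · refine Continuous.const_smul ?_ _
    exact (hF.continuous k).comp (continuous_fst.inv.prodMk (continuous_pi fun i =>
      continuous_fst.inv.inv.adOP ((continuous_apply (Fin.rev i)).comp continuous_snd)))

theorem IsCInf.comp_inv [CompleteSpace E] (h : IsCInf φ) : IsCInf fun x => φ x⁻¹ :=
  let ⟨_, hF⟩ := h
  ⟨_, hF.inv⟩

theorem itD_comp_inv [CompleteSpace E] (h : IsCInf φ) :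
    itD (fun x => φ x⁻¹) = fun k x γ => (-1 : ℝ) ^ k • rightIterDeriv (itD φ) k x⁻¹ (γ ∘ Fin.rev) :=
  itD_spec (itD_smoothSeq h).inv

end RightInvariantDerivatives

section SmoothTopology

variable {𝕜 : Type*} [Ring 𝕜]
variable {G : Type*} [Group G] [TopologicalSpace G] [IsTopologicalGroup G]
variable {Y : Type*} [AddCommGroup Y] [Module ℝ Y] [UniformSpace Y] [ContinuousAdd Y]
  [Module 𝕜 Y] [SMulCommClass ℝ 𝕜 Y] [ContinuousConstSMul 𝕜 Y]

theorem continuous_smoothTop_of_itD_eq {T : SmoothCarrier 𝕜 G Y → SmoothCarrier 𝕜 G Y}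
    (σ : ℕ → Y → Y) (hσ : ∀ k, UniformContinuous (σ k))
    (Θ : ∀ k, G × (Fin k → ↥(OneParam G)) → G × (Fin k → ↥(OneParam G)))
    (hΘ : ∀ k, Continuous (Θ k))
    (hT : ∀ f k p, itD (T f : G → Y) k p.1 p.2 = σ k (itD (f : G → Y) k (Θ k p).1 (Θ k p).2)) :
    Continuous[smoothTop 𝕜 G Y, smoothTop 𝕜 G Y] T := by
  let : TopologicalSpace (SmoothCarrier 𝕜 G Y) := smoothTop 𝕜 G Y
  let 𝔖 : ∀ k, Set (Set (G × (Fin k → ↥(OneParam G)))) := fun _ => {S | IsCompact S}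
  let Φ := fun (f : SmoothCarrier 𝕜 G Y) (k : ℕ) =>
    UniformOnFun.ofFun (𝔖 k) fun p => itD (f : G → Y) k p.1 p.2
  have hΦ : IsInducing Φ := ⟨rfl⟩
  rw [hΦ.continuous_iff]
  refine continuous_pi fun k => ?_
  have hmaps : MapsTo (Θ k '' ·) (𝔖 k) (𝔖 k) := fun S hS => hS.image (hΘ k)
  have hcomp : (fun f => (Φ ∘ T) f k) = (UniformOnFun.ofFun (𝔖 k) ∘ (σ k ∘ ·) ∘
      UniformOnFun.toFun (𝔖 k)) ∘ (fun g => UniformOnFun.ofFun (𝔖 k)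
        (UniformOnFun.toFun (𝔖 k) g ∘ Θ k)) ∘ fun f => Φ f k := by
    funext f
    exact congrArg (UniformOnFun.ofFun (𝔖 k)) (funext (hT f k))
  rw [hcomp]
  exact ((UniformOnFun.postcomp_uniformContinuous (hσ k)).comp
    (UniformOnFun.precomp_uniformContinuous hmaps)).continuous.comp
      ((continuous_apply k).comp hΦ.continuous)

end SmoothTopology

section CheckMap

variable {G : Type*} [Group G] [TopologicalSpace G] [IsTopologicalGroup G]

theorem coe_checkE (f : EC G) : (checkE f : G → ℂ) = fun y => (f : G → ℂ) y⁻¹ := by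
  rw [checkE, dif_pos f.2.comp_inv]

theorem checkE_involutive : Function.Involutive (checkE : EC G → EC G) := fun f =>
  Subtype.ext (by simp only [coe_checkE, inv_inv])

noncomputable def checkLinearMap : EC G →ₗ[ℂ] EC G where
  toFun := checkE
  map_add' f g := Subtype.ext (by simp only [coe_checkE, Submodule.coe_add]; rfl)
  map_smul' c f := Subtype.ext (by simp only [coe_checkE, Submodule.coe_smul]; rfl)

theorem continuous_checkE : Continuous[smoothTop ℂ G ℂ, smoothTop ℂ G ℂ] (checkE : EC G → EC G) :=
  continuous_smoothTop_of_itD_eq (fun k z => (-1 : ℝ) ^ k • z)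
    (fun _ => uniformContinuous_const_smul _)
    (fun k p => (p.1⁻¹, adOP p.1⁻¹⁻¹ ∘ p.2 ∘ Fin.rev))
    (fun _ => continuous_fst.inv.prodMk (continuous_pi fun i =>
      continuous_fst.inv.inv.adOP ((continuous_apply (Fin.rev i)).comp continuous_snd)))
    (fun f k p => by rw [coe_checkE, itD_comp_inv f.2]; rfl)

end CheckMap

/-- The map `φ ↦ φ̌`, `φ̌(x) = φ(x⁻¹)`, is an isomorphism of locally convex spaces
of `E(G) = C^∞(G)` onto itself. -/
theorem check_map_isomorphism
    (G : Type*) [Group G] [TopologicalSpace G] [IsTopologicalGroup G] :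
    letI : TopologicalSpace (EC G) := smoothTop ℂ G ℂ
    ∃ e : EC G ≃L[ℂ] EC G,
      ∀ (f : EC G) (x : G), ((e f : EC G) : G → ℂ) x = (f : G → ℂ) x⁻¹ := by
  let : TopologicalSpace (EC G) := smoothTop ℂ G ℂ
  exact ⟨{ LinearEquiv.ofInvolutive checkLinearMap checkE_involutive with
    continuous_toFun := continuous_checkE
    continuous_invFun := continuous_checkE }, fun f x => congrFun (coe_checkE f) x⟩
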